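/- arXiv:2005.09680 — 4 statements merged into one kernel-verified Lean document; each statement's English description precedes it below -/
import Mathlib

section
/- There exist finite-dimensional real representations U and V of N_{pq²} such that: (1) U and V are not isomorphic; (2) for every subgroup P ≤ N_{pq²} of prime power order, the restrictions of U and V to P are isomorphic (U and V are P-matched); (3) both U and V satisfy the weak gap condition; and (4) dim U^L = dim V^L = 0 for every subgroup L of N_{pq²} containing ⟨a^q⟩. In particular, PO_w^L(N_{pq²}) ≠ 0. -/
open Multiplicative

namespace Mizerka

/-- The standing hypotheses: `p` and `q` are odd primes with `q ∣ p - 1`, and `i` is a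
natural number with `i ≡ 1 (mod q)` whose multiplicative order modulo `p` equals `q`. -/
structure Hyp (p q i : ℕ) : Prop where
  hp : Nat.Prime p
  hq : Nat.Prime q
  hoddp : Odd p
  hoddq : Odd q
  hdvd : q ∣ p - 1
  hmod : i ≡ 1 [MOD q]
  hord : orderOf (i : ZMod p) = q

namespace Hyp

variable {p q i : ℕ}

theorem coprime_q (h : Hyp p q i) : Nat.Coprime i q := by
  have h1 : i % q = 1 % q := h.hmod
  unfold Nat.Coprime
  rw [Nat.gcd_comm, Nat.gcd_rec, h1, ← Nat.gcd_rec, Nat.gcd_one_right]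

theorem coprime_p (h : Hyp p q i) : Nat.Coprime i p := by
  haveI : NeZero p := ⟨h.hp.ne_zero⟩
  have hq1 : q - 1 + 1 = q := Nat.succ_pred_eq_of_pos h.hq.pos
  have hmul : (i : ZMod p) * (i : ZMod p) ^ (q - 1) = 1 := by
    rw [← pow_succ', hq1, ← h.hord, pow_orderOf_eq_one]
  exact (ZMod.isUnit_iff_coprime i p).mp (isUnit_iff_exists_inv.mpr ⟨_, hmul⟩)

theorem coprime (h : Hyp p q i) : Nat.Coprime i (p * q) :=
  Nat.Coprime.mul_right h.coprime_p h.coprime_q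

theorem pow_q_modeq (h : Hyp p q i) : i ^ q ≡ 1 [MOD p * q] := by
  have hpq : p ≠ q := by
    have h1 : 0 < p - 1 := by have := h.hp.two_le; omega
    have := Nat.le_of_dvd h1 h.hdvd
    omega
  have hc : Nat.Coprime p q := (Nat.coprime_primes h.hp h.hq).mpr hpq
  rw [← Nat.modEq_and_modEq_iff_modEq_mul hc]
  constructor
  · haveI : NeZero p := ⟨h.hp.ne_zero⟩
    have hcast : ((i ^ q : ℕ) : ZMod p) = ((1 : ℕ) : ZMod p) := by
      push_cast
      rw [← h.hord, pow_orderOf_eq_one]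
    exact (ZMod.natCast_eq_natCast_iff _ _ _).mp hcast
  · calc i ^ q ≡ 1 ^ q [MOD q] := h.hmod.pow q
      _ = 1 := one_pow q

/-- The unit of `ZMod (p*q)` determined by `i`. -/
def unit (h : Hyp p q i) : (ZMod (p * q))ˣ := ZMod.unitOfCoprime i h.coprime

/-- The unit of `ZMod p` determined by `i`. -/
def unitP (h : Hyp p q i) : (ZMod p)ˣ := ZMod.unitOfCoprime i h.coprime_p

theorem unit_pow (h : Hyp p q i) : h.unit ^ q = 1 := by
  apply Units.ext
  have h2 : ((i ^ q : ℕ) : ZMod (p * q)) = ((1 : ℕ) : ZMod (p * q)) :=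
    (ZMod.natCast_eq_natCast_iff _ _ _).mpr h.pow_q_modeq
  push_cast at h2
  simpa [Hyp.unit] using h2

theorem unitP_pow (h : Hyp p q i) : h.unitP ^ q = 1 := by
  apply Units.ext
  have h2 : (i : ZMod p) ^ q = 1 := by rw [← h.hord]; exact pow_orderOf_eq_one _
  simpa [Hyp.unitP] using h2

end Hyp

/-- Multiplication by a unit, as an automorphism of the (multiplicatively written)
cyclic group `ZMod n`. -/
def zmodMulAut (n : ℕ) : (ZMod n)ˣ →* MulAut (Multiplicative (ZMod n)) where
  toFun u :=
    { toFun := fun x => ofAdd ((u : ZMod n) * x.toAdd)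
      invFun := fun x => ofAdd (((u⁻¹ : (ZMod n)ˣ) : ZMod n) * x.toAdd)
      left_inv := fun x => by simp
      right_inv := fun x => by simp
      map_mul' := fun x y => by simp [mul_add, ← ofAdd_add] }
  map_one' := by ext x; simp
  map_mul' u v := by ext x; simp [mul_assoc]

/-- The function underlying the automorphism of the dihedral group induced by
multiplication by a unit on the rotation part. -/
def dihedralAutFun (n : ℕ) (u : (ZMod n)ˣ) : DihedralGroup n → DihedralGroup n
  | .r j => .r ((u : ZMod n) * j)
  | .sr j => .sr ((u : ZMod n) * j)

/-- Multiplication of indices by a unit, as an automorphism of the dihedral group: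
`a ↦ a^u`, `b ↦ b`. -/
def dihedralAut (n : ℕ) : (ZMod n)ˣ →* MulAut (DihedralGroup n) where
  toFun u :=
    { toFun := dihedralAutFun n u
      invFun := dihedralAutFun n u⁻¹
      left_inv := fun x => by cases x <;> simp [dihedralAutFun]
      right_inv := fun x => by cases x <;> simp [dihedralAutFun]
      map_mul' := fun x y => by cases x <;> cases y <;> simp [dihedralAutFun, mul_add, mul_sub] }
  map_one' := by ext x; cases x <;> simp [dihedralAutFun]
  map_mul' u v := by ext x; cases x <;> simp [dihedralAutFun, mul_assoc]

/-- The homomorphism `ZMod q →* G` (written multiplicatively) sending `1` to a fixed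
element `g` with `g ^ q = 1`. -/
def zmodPow {G : Type*} [Group G] (q : ℕ) [NeZero q] (g : G) (hg : g ^ q = 1) :
    Multiplicative (ZMod q) →* G where
  toFun x := g ^ (toAdd x).val
  map_one' := by
    show g ^ (toAdd (1 : Multiplicative (ZMod q))).val = 1
    rw [toAdd_one, ZMod.val_zero, pow_zero]
  map_mul' x y := by
    have key : ∀ m : ℕ, g ^ (m % q) = g ^ m := fun m => by
      conv_rhs => rw [← Nat.div_add_mod m q]
      rw [pow_add, pow_mul, hg, one_pow, one_mul]
    show g ^ (toAdd (x * y)).val = g ^ (toAdd x).val * g ^ (toAdd y).val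
    rw [toAdd_mul, ZMod.val_add, key, pow_add]

namespace Hyp

variable {p q i : ℕ}

/-- The action of `C_q` on `C_{pq}` sending the generator to multiplication by `i`. -/
def phiN (h : Hyp p q i) : Multiplicative (ZMod q) →* MulAut (Multiplicative (ZMod (p * q))) :=
  haveI : NeZero q := ⟨h.hq.ne_zero⟩
  zmodPow q (zmodMulAut (p * q) h.unit) (by rw [← map_pow, h.unit_pow, map_one])

/-- The action of `C_q` on `D_{2pq}` sending the generator to `τ` (`τ(a) = a^i`, `τ(b) = b`). -/
def phiG (h : Hyp p q i) : Multiplicative (ZMod q) →* MulAut (DihedralGroup (p * q)) :=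
  haveI : NeZero q := ⟨h.hq.ne_zero⟩
  zmodPow q (dihedralAut (p * q) h.unit) (by rw [← map_pow, h.unit_pow, map_one])

/-- The action of `C_q` on `C_p` sending the generator to multiplication by `i`. -/
def phiF (h : Hyp p q i) : Multiplicative (ZMod q) →* MulAut (Multiplicative (ZMod p)) :=
  haveI : NeZero q := ⟨h.hq.ne_zero⟩
  zmodPow q (zmodMulAut p h.unitP) (by rw [← map_pow, h.unitP_pow, map_one])

end Hyp

/-- The group `N_{pq²} = ⟨a, c ∣ a^{pq} = c^q = 1, c a c⁻¹ = a^i⟩ = C_{pq} ⋊ C_q`. -/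
abbrev Npq2 {p q i : ℕ} (h : Hyp p q i) : Type :=
  Multiplicative (ZMod (p * q)) ⋊[h.phiN] Multiplicative (ZMod q)

/-- The group `G_{p,q} = D_{2pq} ⋊_φ C_q`. -/
abbrev Gpq {p q i : ℕ} (h : Hyp p q i) : Type :=
  DihedralGroup (p * q) ⋊[h.phiG] Multiplicative (ZMod q)

/-- The Frobenius group `F_{p,q} = C_p ⋊ C_q` (the nonabelian group of order `pq`). -/
abbrev Fpq {p q i : ℕ} (h : Hyp p q i) : Type :=
  Multiplicative (ZMod p) ⋊[h.phiF] Multiplicative (ZMod q)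

variable {p q i : ℕ}

/-- The generator `a` of `N_{pq²}`. -/
def aN (h : Hyp p q i) : Npq2 h := SemidirectProduct.inl (ofAdd 1)

/-- The generator `c` of `N_{pq²}`. -/
def cN (h : Hyp p q i) : Npq2 h := SemidirectProduct.inr (ofAdd 1)

/-- The generator `a` of `G_{p,q}`. -/
def aG (h : Hyp p q i) : Gpq h := SemidirectProduct.inl (DihedralGroup.r 1)

/-- The generator `b` of `G_{p,q}`. -/
def bG (h : Hyp p q i) : Gpq h := SemidirectProduct.inl (DihedralGroup.sr 0)

/-- The generator `c` of `G_{p,q}`. -/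
def cG (h : Hyp p q i) : Gpq h := SemidirectProduct.inr (ofAdd 1)

/-- The real conjugacy class `(g)^± = (g) ∪ (g⁻¹)`. -/
def realClass {G : Type*} [Group G] (g : G) : Set G := {x | IsConj g x ∨ IsConj g⁻¹ x}

/-- `N` is a normal subgroup whose quotient is an `ℓ`-group (the quotient has `ℓ`-power order,
i.e. `N` has `ℓ`-power index). -/
def OQuot {G : Type*} [Group G] (ℓ : ℕ) (N : Subgroup G) : Prop :=
  N.Normal ∧ ∃ k : ℕ, N.index = ℓ ^ k

/-- `H` is a large subgroup of `G`: it contains `O^ℓ(G)`, the smallest normal subgroup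
with `ℓ`-group quotient, for some prime `ℓ`. -/
def IsLarge {G : Type*} [Group G] (H : Subgroup G) : Prop :=
  ∃ ℓ : ℕ, Nat.Prime ℓ ∧
    ∃ N : Subgroup G, OQuot ℓ N ∧ (∀ M : Subgroup G, OQuot ℓ M → N ≤ M) ∧ N ≤ H

section Reps

variable {k : Type*} [CommSemiring k] {G : Type*} [Group G]

/-- The subspace `V^H` of `H`-fixed vectors of a representation. -/
def fixedPts {V : Type*} [AddCommMonoid V] [Module k V]
    (ρ : Representation k G V) (H : Subgroup G) : Submodule k V where
  carrier := {v | ∀ g ∈ H, ρ g v = v}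
  add_mem' := by
    intro a b ha hb g hg
    rw [map_add, ha g hg, hb g hg]
  zero_mem' := by
    intro g hg
    rw [map_zero]
  smul_mem' := by
    intro c v hv g hg
    rw [map_smul, hv g hg]

end Reps

/-- The weak gap condition for a real representation: `dim V^P ≥ 2 dim V^H` for all
`P < H ≤ G` with `P` of prime power order. -/
def WeakGap {G : Type*} [Group G] {V : Type*} [AddCommGroup V] [Module ℝ V]
    (ρ : Representation ℝ G V) : Prop :=
  ∀ P H : Subgroup G, P < H → (∃ ℓ k : ℕ, Nat.Prime ℓ ∧ Nat.card P = ℓ ^ k) →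
    2 * Module.finrank ℝ (fixedPts ρ H) ≤ Module.finrank ℝ (fixedPts ρ P)

/-- Isomorphism of real representations: an equivariant linear equivalence. -/
def RepIso {G : Type*} [Group G] {U V : Type*} [AddCommGroup U] [Module ℝ U]
    [AddCommGroup V] [Module ℝ V]
    (ρU : Representation ℝ G U) (ρV : Representation ℝ G V) : Prop :=
  ∃ e : U ≃ₗ[ℝ] V, ∀ (g : G) (u : U), e (ρU g u) = ρV g (e u)

/-- Two real representations are `𝒫`-matched if their restrictions to every subgroup of
prime power order are isomorphic. -/
def PMatched {G : Type*} [Group G] {U V : Type*} [AddCommGroup U] [Module ℝ U]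
    [AddCommGroup V] [Module ℝ V]
    (ρU : Representation ℝ G U) (ρV : Representation ℝ G V) : Prop :=
  ∀ P : Subgroup G, (∃ ℓ k : ℕ, Nat.Prime ℓ ∧ Nat.card P = ℓ ^ k) →
    RepIso (ρU.comp P.subtype) (ρV.comp P.subtype)

/-- A bundled finite-dimensional-free real representation of `G`. -/
structure RealRep (G : Type*) [Group G] where
  carrier : Type
  [acg : AddCommGroup carrier]
  [mod : Module ℝ carrier]
  rho : Representation ℝ G carrier

attribute [instance] RealRep.acg RealRep.mod

theorem dihedralAut_pow_r (n : ℕ) (u : (ZMod n)ˣ) (k : ℕ) (m : ZMod n) :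
    ((dihedralAut n u) ^ k) (DihedralGroup.r m)
      = DihedralGroup.r (((u ^ k : (ZMod n)ˣ) : ZMod n) * m) := by
  induction k generalizing m with
  | zero => simp
  | succ k ih =>
    rw [pow_succ, MulAut.mul_apply]
    have h1 : (dihedralAut n u) (DihedralGroup.r m) = DihedralGroup.r ((u : ZMod n) * m) := rfl
    rw [h1, ih, pow_succ, Units.val_mul, mul_assoc]

theorem Hyp.phiG_r (h : Hyp p q i) (z : Multiplicative (ZMod q)) (m : ZMod (p * q)) :
    h.phiG z (DihedralGroup.r m)
      = DihedralGroup.r (((h.unit ^ (toAdd z).val : (ZMod (p * q))ˣ) : ZMod (p * q)) * m) := by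
  have h1 : h.phiG z = (dihedralAut (p * q) h.unit) ^ (toAdd z).val := rfl
  rw [h1, dihedralAut_pow_r]

theorem r_inv (n : ℕ) (m : ZMod n) : (DihedralGroup.r m)⁻¹ = DihedralGroup.r (-m) := rfl

/-- The subgroup `N_{pq²} = {(aˡ, cᵐ)}` of `G_{p,q}`. -/
def NSub (h : Hyp p q i) : Subgroup (Gpq h) where
  carrier := {x | ∃ l : ZMod (p * q), x.left = DihedralGroup.r l}
  one_mem' := ⟨0, rfl⟩
  mul_mem' := by
    rintro x y ⟨lx, hx⟩ ⟨ly, hy⟩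
    refine ⟨lx + (h.unit ^ (toAdd x.right).val : (ZMod (p * q))ˣ) * ly, ?_⟩
    rw [SemidirectProduct.mul_left, hx, hy, h.phiG_r, DihedralGroup.r_mul_r]
  inv_mem' := by
    rintro x ⟨lx, hx⟩
    refine ⟨-((h.unit ^ (toAdd x.right⁻¹).val : (ZMod (p * q))ˣ) * lx), ?_⟩
    rw [SemidirectProduct.inv_left, hx, r_inv, h.phiG_r]
    congr 1
    ring

/-- The subgroup `N_{2pq} = {(bᵉaˡ, 1)} ≅ D_{2pq}` of `G_{p,q}`. -/
def N2pqSub (h : Hyp p q i) : Subgroup (Gpq h) :=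
  MonoidHom.ker SemidirectProduct.rightHom

/-- The subgroup `N¹_{pq} = {(aˡ, 1)}` of `G_{p,q}`. -/
def NpqOneSub (h : Hyp p q i) : Subgroup (Gpq h) where
  carrier := {x | x.right = 1 ∧ ∃ l : ZMod (p * q), x.left = DihedralGroup.r l}
  one_mem' := ⟨rfl, 0, rfl⟩
  mul_mem' := by
    rintro x y ⟨hx1, lx, hx⟩ ⟨hy1, ly, hy⟩
    refine ⟨by rw [SemidirectProduct.mul_right, hx1, hy1, mul_one],
      lx + (h.unit ^ (toAdd x.right).val : (ZMod (p * q))ˣ) * ly, ?_⟩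
    rw [SemidirectProduct.mul_left, hx, hy, h.phiG_r, DihedralGroup.r_mul_r]
  inv_mem' := by
    rintro x ⟨hx1, lx, hx⟩
    refine ⟨by rw [SemidirectProduct.inv_right, hx1, inv_one],
      -((h.unit ^ (toAdd x.right⁻¹).val : (ZMod (p * q))ˣ) * lx), ?_⟩
    rw [SemidirectProduct.inv_left, hx, r_inv, h.phiG_r]
    congr 1
    ring

/-- The subgroup `N²_{pq} = {(a^{qs}, cᵐ)}` of `G_{p,q}`. -/
def NpqTwoSub (h : Hyp p q i) : Subgroup (Gpq h) where
  carrier := {x | ∃ s : ZMod (p * q), x.left = DihedralGroup.r ((q : ZMod (p * q)) * s)}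
  one_mem' := ⟨0, by rw [mul_zero]; rfl⟩
  mul_mem' := by
    rintro x y ⟨sx, hx⟩ ⟨sy, hy⟩
    refine ⟨sx + (h.unit ^ (toAdd x.right).val : (ZMod (p * q))ˣ) * sy, ?_⟩
    rw [SemidirectProduct.mul_left, hx, hy, h.phiG_r, DihedralGroup.r_mul_r]
    congr 1
    ring
  inv_mem' := by
    rintro x ⟨sx, hx⟩
    refine ⟨-((h.unit ^ (toAdd x.right⁻¹).val : (ZMod (p * q))ˣ) * sx), ?_⟩
    rw [SemidirectProduct.inv_left, hx, r_inv, h.phiG_r]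
    congr 1
    ring

/-- The subgroup `N_p = {(a^{qs}, 1)}` of `G_{p,q}`. -/
def NpSub (h : Hyp p q i) : Subgroup (Gpq h) where
  carrier := {x | x.right = 1 ∧ ∃ s : ZMod (p * q), x.left = DihedralGroup.r ((q : ZMod (p * q)) * s)}
  one_mem' := ⟨rfl, 0, by rw [mul_zero]; rfl⟩
  mul_mem' := by
    rintro x y ⟨hx1, sx, hx⟩ ⟨hy1, sy, hy⟩
    refine ⟨by rw [SemidirectProduct.mul_right, hx1, hy1, mul_one],
      sx + (h.unit ^ (toAdd x.right).val : (ZMod (p * q))ˣ) * sy, ?_⟩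
    rw [SemidirectProduct.mul_left, hx, hy, h.phiG_r, DihedralGroup.r_mul_r]
    congr 1
    ring
  inv_mem' := by
    rintro x ⟨hx1, sx, hx⟩
    refine ⟨by rw [SemidirectProduct.inv_right, hx1, inv_one],
      -((h.unit ^ (toAdd x.right⁻¹).val : (ZMod (p * q))ˣ) * sx), ?_⟩
    rw [SemidirectProduct.inv_left, hx, r_inv, h.phiG_r]
    congr 1
    ring

/-- The subgroup `N_q = {(a^{ps}, 1)}` of `G_{p,q}`. -/
def NqSub (h : Hyp p q i) : Subgroup (Gpq h) where
  carrier := {x | x.right = 1 ∧ ∃ s : ZMod (p * q), x.left = DihedralGroup.r ((p : ZMod (p * q)) * s)}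
  one_mem' := ⟨rfl, 0, by rw [mul_zero]; rfl⟩
  mul_mem' := by
    rintro x y ⟨hx1, sx, hx⟩ ⟨hy1, sy, hy⟩
    refine ⟨by rw [SemidirectProduct.mul_right, hx1, hy1, mul_one],
      sx + (h.unit ^ (toAdd x.right).val : (ZMod (p * q))ˣ) * sy, ?_⟩
    rw [SemidirectProduct.mul_left, hx, hy, h.phiG_r, DihedralGroup.r_mul_r]
    congr 1
    ring
  inv_mem' := by
    rintro x ⟨hx1, sx, hx⟩
    refine ⟨by rw [SemidirectProduct.inv_right, hx1, inv_one],
      -((h.unit ^ (toAdd x.right⁻¹).val : (ZMod (p * q))ˣ) * sx), ?_⟩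
    rw [SemidirectProduct.inv_left, hx, r_inv, h.phiG_r]
    congr 1
    ring

end Mizerka

/-!
Let `ζ = e^{2πi/pq}` and, for `t : ZMod (p * q)`, let `ρ_t` be the representation of `N_{pq²}`
induced from the character `a ↦ ζ ^ t` of `⟨a⟩`, viewed as a real representation. Take
`U = ρ_1` and `V = ρ_s` with `s ≡ 1 (mod p)` and `s ≡ -1 (mod q)`.

A subgroup of prime power order prime to `q` lies in `⟨a ^ q⟩`, where `ρ_1` and `ρ_s` agree.
A `q`-subgroup is conjugate into `⟨a ^ p, c⟩`, where `ρ_s` is the complex conjugate of `ρ_1`,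
and complex conjugation is a real isomorphism. On the other hand `ζ` is an eigenvalue of `ρ_1(a)`,
while the eigenvalues `ζ ^ (s i ^ j)` of `ρ_s(a)` avoid both `ζ` and `ζ⁻¹`, so no real
isomorphism exists.

For a unit `t`, every nontrivial element of `⟨a⟩` acts without nonzero fixed vectors. A subgroup
`H` meeting `⟨a⟩` trivially embeds in `⟨c⟩ ≅ C_q`, so `P < H` forces `P = 1`, while
`dim ρ_t^H ≤ 2 ≤ q = dim ρ_t / 2` because a fixed vector is determined by one coordinate.
-/

namespace Mizerka

theorem Hyp.coprime_pq {p q i : ℕ} (h : Hyp p q i) : p.Coprime q := by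
  refine (Nat.coprime_primes h.hp h.hq).mpr fun hpq => ?_
  have := h.hp.two_le
  have := Nat.le_of_dvd (by omega) h.hdvd
  omega

theorem Hyp.two_lt_p {p q i : ℕ} (h : Hyp p q i) : 2 < p := by
  obtain ⟨k, hk⟩ := h.hoddp
  have := h.hp.two_le
  omega

theorem Hyp.two_lt_q {p q i : ℕ} (h : Hyp p q i) : 2 < q := by
  obtain ⟨k, hk⟩ := h.hoddq
  have := h.hq.two_le
  omega

def castHomLeft (m n : ℕ) : ZMod (m * n) →+* ZMod m := ZMod.castHom (dvd_mul_right m n) _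

def castHomRight (m n : ℕ) : ZMod (m * n) →+* ZMod n := ZMod.castHom (dvd_mul_left n m) _

theorem chineseRemainder_apply {m n : ℕ} (hmn : m.Coprime n) (z : ZMod (m * n)) :
    ZMod.chineseRemainder hmn z = (castHomLeft m n z, castHomRight m n z) := by
  ext <;> simp [ZMod.chineseRemainder, castHomLeft, castHomRight, Prod.fst_zmod_cast,
    Prod.snd_zmod_cast]

theorem eq_zero_of_castHom_eq_zero {m n : ℕ} (hmn : m.Coprime n) {z : ZMod (m * n)}
    (hm : castHomLeft m n z = 0) (hn : castHomRight m n z = 0) : z = 0 :=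
  (ZMod.chineseRemainder hmn).injective (by rw [chineseRemainder_apply, hm, hn, map_zero]; rfl)

def Hyp.s {p q i : ℕ} (h : Hyp p q i) : ZMod (p * q) :=
  (ZMod.chineseRemainder h.coprime_pq).symm (1, -1)

theorem Hyp.castHom_s {p q i : ℕ} (h : Hyp p q i) :
    castHomLeft p q h.s = 1 ∧ castHomRight p q h.s = -1 := by
  have := chineseRemainder_apply h.coprime_pq h.s
  rw [Hyp.s, RingEquiv.apply_symm_apply] at this
  exact ⟨(Prod.ext_iff.mp this).1.symm, (Prod.ext_iff.mp this).2.symm⟩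

theorem Hyp.isUnit_s {p q i : ℕ} (h : Hyp p q i) : IsUnit h.s := by
  refine IsUnit.of_mul_eq_one h.s (sub_eq_zero.mp ?_)
  apply eq_zero_of_castHom_eq_zero h.coprime_pq <;> simp [h.castHom_s]

theorem conj_toCircle {N : ℕ} [NeZero N] (a : ZMod N) :
    starRingEnd ℂ (ZMod.toCircle a) = ZMod.toCircle (-a) := by
  rw [AddChar.map_neg_eq_inv, Circle.coe_inv_eq_conj]

theorem exists_zpow_eq {q : ℕ} [Fact q.Prime] {m : Multiplicative (ZMod q)} (hm : m ≠ 1)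
    (z : Multiplicative (ZMod q)) : ∃ K : ℤ, m ^ K = z := by
  rw [← Subgroup.mem_zpowers_iff, zpowers_eq_top_of_prime_card (p := q)
    (by rw [Nat.card_congr toAdd, Nat.card_zmod]) hm]
  trivial

theorem eq_bot_of_lt_of_injective {G K : Type*} [Group G] [Group K]
    (hK : (Nat.card K).Prime) (f : G →* K) {P H : Subgroup G}
    (hf : Function.Injective (f.comp H.subtype)) (hPH : P < H) : P = ⊥ := by
  have hHK := Subgroup.card_dvd_of_injective _ hf
  have : Finite H := Nat.finite_of_card_ne_zero (ne_zero_of_dvd_ne_zero hK.ne_zero hHK)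
  rcases (Nat.dvd_prime hK).mp ((Subgroup.card_dvd_of_le hPH.le).trans hHK) with hP | hP
  · exact Subgroup.card_eq_one.mp hP
  · refine absurd (Subgroup.eq_of_le_of_card_ge hPH.le ?_) hPH.ne
    rw [hP]
    exact Nat.le_of_dvd hK.pos hHK

theorem fixedPts_bot {k G V : Type*} [CommSemiring k] [Group G] [AddCommMonoid V] [Module k V]
    (ρ : Representation k G V) : fixedPts ρ ⊥ = ⊤ :=
  eq_top_iff.mpr fun v _ g hg => by rw [Subgroup.mem_bot.mp hg, map_one, Module.End.one_apply]

theorem repIso_comp_subtype_of_conj {G U V : Type*} [Group G] [AddCommGroup U] [Module ℝ U]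
    [AddCommGroup V] [Module ℝ V] {ρU : Representation ℝ G U} {ρV : Representation ℝ G V}
    {P : Subgroup G} (g : G) (e : U ≃ₗ[ℝ] V)
    (he : ∀ x ∈ P, ∀ u, e (ρU (MulAut.conj g x) u) = ρV (MulAut.conj g x) (e u)) :
    RepIso (ρU.comp P.subtype) (ρV.comp P.subtype) := by
  let actU := LinearMap.GeneralLinearGroup.generalLinearEquiv ℝ U (ρU.asGroupHom g)
  let actV := LinearMap.GeneralLinearGroup.generalLinearEquiv ℝ V (ρV.asGroupHom g⁻¹)
  refine ⟨actU.trans (e.trans actV), fun x u => ?_⟩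
  show ρV g⁻¹ (e (ρU g (ρU x u))) = ρV x (ρV g⁻¹ (e (ρU g u)))
  have hU : ρU g (ρU x u) = ρU (MulAut.conj g x) (ρU g u) := by
    simp only [MulAut.conj_apply, ← Module.End.mul_apply, ← map_mul, inv_mul_cancel_right]
  have hV : ∀ w, ρV g⁻¹ (ρV (MulAut.conj g x) w) = ρV x (ρV g⁻¹ w) := fun w => by
    simp only [MulAut.conj_apply, ← Module.End.mul_apply, ← map_mul, mul_assoc,
      inv_mul_cancel_left]
  rw [hU, he x x.2, hV]

noncomputable def conjEquiv (X : Type*) : (X → ℂ) ≃ₗ[ℝ] (X → ℂ) :=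
  LinearEquiv.piCongrRight fun _ => Complex.conjAe.toLinearEquiv

section Npq2

variable {p q i : ℕ} (h : Hyp p q i)

theorem right_eq_one_of_pow_eq_one {x : Npq2 h} {C : ℕ} (hC : C.Coprime q) (hx : x ^ C = 1) :
    x.right = 1 := by
  have hxr : x.right ^ C = 1 := by
    rw [← SemidirectProduct.rightHom_eq_right, ← map_pow, hx, map_one]
  rw [← toAdd_eq_zero, ← ((ZMod.isUnit_iff_coprime C q).mpr hC).mul_right_eq_zero,
    ← nsmul_eq_mul, ← toAdd_pow, hxr, toAdd_one]

theorem castHom_left_eq_zero {x : Npq2 h} {C d : ℕ} (hd : d ∣ p * q) (hC : C.Coprime d)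
    (hr : x.right = 1) (hx : x ^ C = 1) : ZMod.castHom hd (ZMod d) (toAdd x.left) = 0 := by
  have hxl : x.left ^ C = 1 := by
    rw [← SemidirectProduct.inl_left_mul_inr_right x, hr, map_one, mul_one, ← map_pow] at hx
    exact SemidirectProduct.inl_injective (hx.trans (map_one _).symm)
  rw [← ((ZMod.isUnit_iff_coprime C d).mpr hC).mul_right_eq_zero,
    ← map_natCast (ZMod.castHom hd (ZMod d)) C, ← map_mul, ← nsmul_eq_mul, ← toAdd_pow, hxl,
    toAdd_one, map_zero]

theorem aN_pow (k : ℕ) : aN h ^ k = SemidirectProduct.inl (ofAdd (k : ZMod (p * q))) := by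
  rw [aN, ← map_pow, ← ofAdd_nsmul, nsmul_one]

theorem aN_pow_q_left_ne_one : (aN h ^ q).left ≠ 1 := by
  rw [aN_pow, SemidirectProduct.left_inl, Ne, ← toAdd_eq_zero, toAdd_ofAdd,
    ZMod.natCast_eq_zero_iff]
  intro hdvd
  have := Nat.le_of_dvd h.hq.pos hdvd
  have := h.two_lt_p
  nlinarith [h.hq.pos]

theorem conj_inl_right (k : ZMod (p * q)) (x : Npq2 h) :
    (MulAut.conj (SemidirectProduct.inl (ofAdd k)) x).right = x.right := by
  simp [MulAut.conj_apply]

variable [NeZero q]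

/-- `c ^ y` acts on `⟨a⟩ ≅ ZMod (p * q)` as multiplication by `twist y = i ^ y`. -/
def Hyp.twist : Multiplicative (ZMod q) →* ZMod (p * q) :=
  (Units.coeHom _).comp (zmodPow q h.unit h.unit_pow)

theorem Hyp.toAdd_phiN_apply (y : Multiplicative (ZMod q)) (x : Multiplicative (ZMod (p * q))) :
    toAdd (h.phiN y x) = h.twist y * toAdd x := by
  show toAdd ((zmodMulAut (p * q) h.unit ^ (toAdd y).val) x) = _
  rw [← map_pow]
  rfl

theorem Hyp.isUnit_twist (y : Multiplicative (ZMod q)) : IsUnit (h.twist y) :=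
  (zmodPow q h.unit h.unit_pow y).isUnit

theorem Hyp.twist_pow_q (y : Multiplicative (ZMod q)) : h.twist y ^ q = 1 := by
  have hy : y ^ q = 1 := by
    rw [← toAdd_eq_zero, toAdd_pow, nsmul_eq_mul, ZMod.natCast_self, zero_mul]
  rw [← map_pow, hy, map_one]

theorem Hyp.castHomRight_twist (y : Multiplicative (ZMod q)) :
    castHomRight p q (h.twist y) = 1 := by
  have hi : ((i : ℕ) : ZMod q) = 1 := by
    simpa using (ZMod.natCast_eq_natCast_iff _ _ _).mpr h.hmod
  show castHomRight p q ((h.unit ^ (toAdd y).val : (ZMod (p * q))ˣ) : ZMod (p * q)) = 1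
  rw [Units.val_pow_eq_pow_val, map_pow, Hyp.unit, ZMod.coe_unitOfCoprime, map_natCast, hi,
    one_pow]

theorem Hyp.castHomLeft_twist_ne_one {y : Multiplicative (ZMod q)} (hy : y ≠ 1) :
    castHomLeft p q (h.twist y) ≠ 1 := by
  show castHomLeft p q ((h.unit ^ (toAdd y).val : (ZMod (p * q))ˣ) : ZMod (p * q)) ≠ 1
  rw [Units.val_pow_eq_pow_val, map_pow, Hyp.unit, ZMod.coe_unitOfCoprime, map_natCast]
  intro hpow
  have hval := Nat.eq_zero_of_dvd_of_lt (h.hord ▸ orderOf_dvd_of_pow_eq_one hpow) (ZMod.val_lt _)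
  exact hy (toAdd_eq_zero.mp ((ZMod.val_eq_zero _).mp hval))

theorem Hyp.s_mul_twist_ne (y : Multiplicative (ZMod q)) :
    h.s * h.twist y ≠ 1 ∧ h.s * h.twist y ≠ -1 := by
  constructor <;> intro hy
  · have : Fact (2 < q) := ⟨h.two_lt_q⟩
    have := congrArg (castHomRight p q) hy
    rw [map_mul, h.castHomRight_twist, h.castHom_s.2, map_one, mul_one] at this
    exact ZMod.neg_one_ne_one this
  · have : Fact (2 < p) := ⟨h.two_lt_p⟩
    have := congrArg (fun z => castHomLeft p q z ^ q) hy
    simp only [map_mul, h.castHom_s.1, one_mul, ← map_pow, h.twist_pow_q, map_neg, map_one,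
      h.hoddq.neg_one_pow] at this
    exact ZMod.neg_one_ne_one this.symm

theorem toAdd_left_mul (x y : Npq2 h) :
    toAdd (x * y).left = toAdd x.left + h.twist x.right * toAdd y.left := by
  rw [SemidirectProduct.mul_left, toAdd_mul, h.toAdd_phiN_apply]

/-- `⟨a ^ p, c⟩`, a Sylow `q`-subgroup of `N_{pq²}`. -/
def sylowQ : Subgroup (Npq2 h) where
  carrier := {x | castHomLeft p q (toAdd x.left) = 0}
  one_mem' := by simp
  mul_mem' {x y} hx hy := by
    simp only [Set.mem_ofPred_eq, toAdd_left_mul, map_add, map_mul] at hx hy ⊢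
    rw [hx, hy, mul_zero, add_zero]
  inv_mem' {x} hx := by
    simp only [Set.mem_ofPred_eq, SemidirectProduct.inv_left, h.toAdd_phiN_apply, toAdd_inv,
      map_mul, map_neg] at hx ⊢
    rw [hx, neg_zero, mul_zero]

theorem mem_sylowQ_of_right_eq_one {x : Npq2 h} {C : ℕ} (hC : C.Coprime p) (hr : x.right = 1)
    (hx : x ^ C = 1) : x ∈ sylowQ h :=
  castHom_left_eq_zero h (dvd_mul_right p q) hC hr hx

theorem toAdd_conj_inl_left (k : ZMod (p * q)) (x : Npq2 h) :
    toAdd (MulAut.conj (SemidirectProduct.inl (ofAdd k)) x).left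
      = toAdd x.left + (1 - h.twist x.right) * k := by
  simp [MulAut.conj_apply, h.toAdd_phiN_apply]
  ring

theorem exists_conj_mem_sylowQ {P : Subgroup (Npq2 h)} {C : ℕ} (hC : C.Coprime p)
    (hP : ∀ x ∈ P, x ^ C = 1) : ∃ g : Npq2 h, ∀ x ∈ P, MulAut.conj g x ∈ sylowQ h := by
  by_cases hr : ∀ x ∈ P, x.right = 1
  · exact ⟨1, fun x hx => by simpa using mem_sylowQ_of_right_eq_one h hC (hr x hx) (hP x hx)⟩
  obtain ⟨x₀, hx₀, hm₀⟩ := not_forall₂.mp hr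
  have : Fact p.Prime := ⟨h.hp⟩
  have : Fact q.Prime := ⟨h.hq⟩
  -- conjugation by `a ^ k` adds `(1 - i ^ m₀) k` to the `a`-exponent of `x₀`; `i ^ m₀ ≠ 1`
  have hunit : 1 - castHomLeft p q (h.twist x₀.right) ≠ 0 :=
    sub_ne_zero.mpr (h.castHomLeft_twist_ne_one hm₀).symm
  obtain ⟨k, hk⟩ : ∃ k, castHomLeft p q k
      = -castHomLeft p q (toAdd x₀.left) / (1 - castHomLeft p q (h.twist x₀.right)) :=
    ZMod.castHom_surjective _ _
  set g : Npq2 h := SemidirectProduct.inl (ofAdd k)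
  have hg₀ : MulAut.conj g x₀ ∈ sylowQ h := by
    show castHomLeft p q _ = 0
    rw [toAdd_conj_inl_left, map_add, map_mul, map_sub, map_one, hk]
    field_simp
    ring
  refine ⟨g, fun x hx => ?_⟩
  obtain ⟨K, hK⟩ := exists_zpow_eq hm₀ x.right⁻¹
  have hy : MulAut.conj g (x₀ ^ K * x) ∈ sylowQ h := by
    refine mem_sylowQ_of_right_eq_one h hC ?_ ?_
    · rw [conj_inl_right, SemidirectProduct.mul_right, ← SemidirectProduct.rightHom_eq_right,
        map_zpow, SemidirectProduct.rightHom_eq_right, hK, inv_mul_cancel]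
    · rw [← map_pow, hP _ (P.mul_mem (P.zpow_mem hx₀ K) hx), map_one]
  have hx' : MulAut.conj g x = (MulAut.conj g x₀ ^ K)⁻¹ * MulAut.conj g (x₀ ^ K * x) := by
    rw [map_mul, map_zpow, inv_mul_cancel_left]
  rw [hx']
  exact (sylowQ h).mul_mem ((sylowQ h).inv_mem ((sylowQ h).zpow_mem hg₀ K)) hy

theorem finrank_real_pi_complex : Module.finrank ℝ (Multiplicative (ZMod q) → ℂ) = 2 * q := by
  rw [Module.finrank_pi_fintype, Finset.sum_const, Finset.card_univ, Complex.finrank_real_complex,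
    smul_eq_mul, mul_comm, Fintype.card_congr toAdd, ZMod.card]

variable [NeZero p]

/-- The representation induced from the character `a ↦ ζ ^ t` of `⟨a⟩`, `ζ = e^{2πi/pq}`,
realised on functions on `⟨c⟩`. -/
noncomputable def rho (t : ZMod (p * q)) :
    Representation ℝ (Npq2 h) (Multiplicative (ZMod q) → ℂ) where
  toFun g :=
    { toFun := fun v y => ZMod.toCircle (t * h.twist y * toAdd g.left) * v (y * g.right)
      map_add' := fun v w => by funext y; simp [mul_add]
      map_smul' := fun r v => by funext y; simp [mul_left_comm] }
  map_one' := LinearMap.ext fun v => funext fun y => by simp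
  map_mul' g₁ g₂ := LinearMap.ext fun v => funext fun y => by
    simp [h.toAdd_phiN_apply, mul_add, AddChar.map_add_eq_mul, mul_assoc]

theorem rho_apply (t : ZMod (p * q)) (g : Npq2 h) (v : Multiplicative (ZMod q) → ℂ) (y) :
    rho h t g v y = ZMod.toCircle (t * h.twist y * toAdd g.left) * v (y * g.right) := rfl

theorem rho_eq_rho {t t' : ZMod (p * q)} {x : Npq2 h} (hx : (t - t') * toAdd x.left = 0) :
    rho h t x = rho h t' x := by
  refine LinearMap.ext fun v => funext fun y => ?_
  rw [rho_apply, rho_apply]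
  congr 3
  linear_combination h.twist y * hx

theorem conjEquiv_rho {t t' : ZMod (p * q)} {x : Npq2 h} (hx : (t + t') * toAdd x.left = 0)
    (v : Multiplicative (ZMod q) → ℂ) :
    conjEquiv _ (rho h t x v) = rho h t' x (conjEquiv _ v) := by
  funext y
  simp only [conjEquiv, LinearEquiv.piCongrRight_apply, rho_apply, AlgEquiv.toLinearEquiv_apply,
    Complex.conjAe_coe, map_mul, conj_toCircle]
  congr 3
  linear_combination -h.twist y * hx

theorem rho_one_eq_rho_s {x : Npq2 h} (hx : castHomRight p q (toAdd x.left) = 0) :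
    rho h 1 x = rho h h.s x :=
  rho_eq_rho h <| eq_zero_of_castHom_eq_zero h.coprime_pq (by simp [h.castHom_s]) (by simp [hx])

theorem conjEquiv_rho_one {x : Npq2 h} (hx : castHomLeft p q (toAdd x.left) = 0)
    (v : Multiplicative (ZMod q) → ℂ) :
    conjEquiv _ (rho h 1 x v) = rho h h.s x (conjEquiv _ v) :=
  conjEquiv_rho h (eq_zero_of_castHom_eq_zero h.coprime_pq (by simp [hx])
    (by simp [h.castHom_s])) v

theorem pMatched_rho : PMatched (rho h 1) (rho h h.s) := by
  rintro P ⟨ℓ, k, hℓ, hcard⟩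
  have hP : ∀ x ∈ P, x ^ ℓ ^ k = 1 := fun x hx => by
    simpa [hcard] using congrArg Subtype.val (pow_card_eq_one' (x := (⟨x, hx⟩ : P)))
  by_cases hℓq : ℓ = q
  · rw [hℓq] at hP
    obtain ⟨g, hg⟩ := exists_conj_mem_sylowQ h (Nat.Coprime.pow_left k h.coprime_pq.symm) hP
    exact repIso_comp_subtype_of_conj g (conjEquiv _) fun x hx => conjEquiv_rho_one h (hg x hx)
  · have hC : (ℓ ^ k).Coprime q :=
      Nat.Coprime.pow_left k ((Nat.coprime_primes hℓ h.hq).mpr hℓq)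
    refine ⟨LinearEquiv.refl ℝ _, fun x u => ?_⟩
    have hr := right_eq_one_of_pow_eq_one h hC (hP x x.2)
    simp [rho_one_eq_rho_s h (castHom_left_eq_zero h (dvd_mul_left q p) hC hr (hP x x.2))]

theorem rho_aN_apply (t : ZMod (p * q)) (v : Multiplicative (ZMod q) → ℂ) (y) :
    rho h t (aN h) v y = ZMod.toCircle (t * h.twist y) * v y := by
  simp [rho_apply, aN]

theorem rho_aN_quadratic_apply (t : ZMod (p * q)) (v : Multiplicative (ZMod q) → ℂ) (y) :
    (rho h t (aN h) (rho h t (aN h) v) - (2 * (ZMod.toCircle (1 : ZMod (p * q)) : ℂ).re) •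
      rho h t (aN h) v + v) y
      = (ZMod.toCircle (t * h.twist y) - ZMod.toCircle (1 : ZMod (p * q))) *
        (ZMod.toCircle (t * h.twist y) - ZMod.toCircle (-1 : ZMod (p * q))) * v y := by
  have hre : ((2 * (ZMod.toCircle (1 : ZMod (p * q)) : ℂ).re : ℝ) : ℂ)
      = ZMod.toCircle (1 : ZMod (p * q)) + ZMod.toCircle (-1 : ZMod (p * q)) := by
    rw [← conj_toCircle, Complex.add_conj, Complex.ofReal_mul, Complex.ofReal_ofNat]
  have hnorm :
      (ZMod.toCircle (1 : ZMod (p * q)) : ℂ) * ZMod.toCircle (-1 : ZMod (p * q)) = 1 := by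
    rw [← Circle.coe_mul, ← AddChar.map_add_eq_mul, add_neg_cancel, AddChar.map_zero_eq_one,
      Circle.coe_one]
  simp only [Pi.add_apply, Pi.sub_apply, Pi.smul_apply, rho_aN_apply, Complex.real_smul, hre]
  linear_combination -(v y) * hnorm

theorem not_repIso_rho : ¬ RepIso (rho h 1) (rho h h.s) := by
  rintro ⟨e, he⟩
  set u : Multiplicative (ZMod q) → ℂ := Pi.single 1 1
  -- `(X - ζ)(X - ζ̄)` has real coefficients, so it commutes with the real intertwiner `e`
  set c : ℝ := 2 * (ZMod.toCircle (1 : ZMod (p * q)) : ℂ).re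
  have hu : rho h 1 (aN h) (rho h 1 (aN h) u) - c • rho h 1 (aN h) u + u = 0 := by
    funext y
    rw [rho_aN_quadratic_apply]
    by_cases hy : y = 1
    · simp [hy]
    · simp [u, hy]
  have heu :
      rho h h.s (aN h) (rho h h.s (aN h) (e u)) - c • rho h h.s (aN h) (e u) + e u = 0 := by
    rw [← he, ← he, ← map_smul, ← map_sub, ← map_add, hu, map_zero]
  have hzero : e u = 0 := funext fun y => by
    have hy := congrFun heu y
    rw [rho_aN_quadratic_apply] at hy
    refine (mul_eq_zero.mp hy).resolve_left (mul_ne_zero ?_ ?_) <;> rw [sub_ne_zero] <;>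
      refine (ZMod.injective_stdAddChar (N := p * q)).ne ?_
    exacts [(h.s_mul_twist_ne y).1, (h.s_mul_twist_ne y).2]
  simpa [u] using congrFun (e.map_eq_zero_iff.mp hzero) 1

theorem fixedPts_rho_eq_bot {t : ZMod (p * q)} (ht : IsUnit t) {H : Subgroup (Npq2 h)}
    {x : Npq2 h} (hx : x ∈ H) (hr : x.right = 1) (hl : x.left ≠ 1) :
    fixedPts (rho h t) H = ⊥ := by
  refine (Submodule.eq_bot_iff _).mpr fun v hv => funext fun y => ?_
  have hy := congrFun (hv x hx) y
  rw [rho_apply, hr, mul_one] at hy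
  have hne : (ZMod.toCircle (t * h.twist y * toAdd x.left) : ℂ) ≠ 1 := by
    rw [← Circle.coe_one, ← AddChar.map_zero_eq_one (ZMod.toCircle (N := p * q))]
    refine (ZMod.injective_stdAddChar (N := p * q)).ne ?_
    exact (ht.mul (h.isUnit_twist y)).mul_right_eq_zero.not.mpr (toAdd_eq_zero.not.mpr hl)
  have : ((ZMod.toCircle (t * h.twist y * toAdd x.left) : ℂ) - 1) * v y = 0 := by
    rw [sub_mul, hy, one_mul, sub_self]
  exact (mul_eq_zero.mp this).resolve_left (sub_ne_zero.mpr hne)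

theorem finrank_fixedPts_rho_le_two {t : ZMod (p * q)} {H : Subgroup (Npq2 h)} {x : Npq2 h}
    (hx : x ∈ H) (hr : x.right ≠ 1) : Module.finrank ℝ (fixedPts (rho h t) H) ≤ 2 := by
  have : Fact q.Prime := ⟨h.hq⟩
  let ev : fixedPts (rho h t) H →ₗ[ℝ] ℂ := (LinearMap.proj 1).comp (Submodule.subtype _)
  have hev : Function.Injective ev := by
    refine (injective_iff_map_eq_zero ev).mpr fun ⟨v, hv⟩ hv1 => ?_
    replace hv1 : v 1 = 0 := hv1
    suffices ∀ y, v y = 0 from Subtype.ext (funext this)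
    -- `v` vanishes at `z` iff it vanishes at `z * x.right`, and `x.right` generates `⟨c⟩`
    have hstep : ∀ z, v (z * x.right) = 0 ↔ v z = 0 := fun z => by
      rw [← congrFun (hv x hx) z, rho_apply, mul_eq_zero, or_iff_right (Circle.coe_ne_zero _)]
    intro y
    obtain ⟨K, rfl⟩ := exists_zpow_eq hr y
    induction K using Int.induction_on with
    | zero => simpa using hv1
    | succ K ih => rwa [zpow_add_one, hstep]
    | pred K ih => rwa [← hstep, zpow_sub_one, inv_mul_cancel_right]
  simpa using LinearMap.finrank_le_finrank_of_injective hev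

theorem weakGap_rho {t : ZMod (p * q)} (ht : IsUnit t) : WeakGap (rho h t) := by
  intro P H hPH _
  by_cases hA : ∃ x ∈ H, x.right = 1 ∧ x.left ≠ 1
  · obtain ⟨x, hx, hr, hl⟩ := hA
    rw [fixedPts_rho_eq_bot h ht hx hr hl, finrank_bot, mul_zero]
    exact Nat.zero_le _
  have hinj : Function.Injective (SemidirectProduct.rightHom.comp H.subtype) :=
    (injective_iff_map_eq_one _).mpr fun ⟨x, hx⟩ hr => Subtype.ext <|
      SemidirectProduct.ext (not_not.mp fun hl => hA ⟨x, hx, hr, hl⟩) hr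
  have hP := eq_bot_of_lt_of_injective (by simpa [Nat.card_congr toAdd] using h.hq) _ hinj hPH
  obtain ⟨x, hx, hx1⟩ := (Subgroup.bot_or_exists_ne_one H).resolve_left (hP ▸ hPH).ne'
  have hr : x.right ≠ 1 := fun hr =>
    hA ⟨x, hx, hr, fun hl => hx1 (SemidirectProduct.ext hl hr)⟩
  rw [hP, fixedPts_bot, finrank_top, finrank_real_pi_complex]
  have := finrank_fixedPts_rho_le_two h hx hr (t := t)
  have := h.two_lt_q
  omega

end Npq2

end Mizerka

open Mizerka in
/-- There exist finite-dimensional real representations `U`, `V` of `N_{pq²}`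
which are non-isomorphic, `𝒫`-matched, both satisfying the weak gap condition, and with
`dim U^L = dim V^L = 0` for every subgroup `L` containing `⟨a^q⟩`. -/
theorem statement_7 {p q i : ℕ} (h : Hyp p q i) :
    ∃ U V : RealRep (Npq2 h),
      FiniteDimensional ℝ U.carrier ∧ FiniteDimensional ℝ V.carrier ∧
      ¬ RepIso U.rho V.rho ∧
      PMatched U.rho V.rho ∧
      WeakGap U.rho ∧ WeakGap V.rho ∧
      ∀ L : Subgroup (Npq2 h), Subgroup.zpowers ((aN h) ^ q) ≤ L →
        Module.finrank ℝ (fixedPts U.rho L) = 0 ∧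
        Module.finrank ℝ (fixedPts V.rho L) = 0 := by
  have : NeZero p := ⟨h.hp.ne_zero⟩
  have : NeZero q := ⟨h.hq.ne_zero⟩
  refine ⟨⟨_, rho h 1⟩, ⟨_, rho h h.s⟩, inferInstance, inferInstance, not_repIso_rho h,
    pMatched_rho h, weakGap_rho h isUnit_one, weakGap_rho h h.isUnit_s, fun L hL => ?_⟩
  have hmem : aN h ^ q ∈ L := hL (Subgroup.mem_zpowers _)
  have hr : (aN h ^ q).right = 1 := by rw [aN_pow, SemidirectProduct.right_inl]
  exact ⟨by rw [fixedPts_rho_eq_bot h isUnit_one hmem hr (aN_pow_q_left_ne_one h), finrank_bot],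
    by rw [fixedPts_rho_eq_bot h h.isUnit_s hmem hr (aN_pow_q_left_ne_one h), finrank_bot]⟩
end

section
/- Let l be an integer with p ∤ l and q ∤ l, and set n = (a^l, 1) ∈ G_{p,q}. Then: (1) n has order pq; (2) the conjugacy class of n in G_{p,q} equals {(a^{l i^m}, 1), (a^{−l i^m}, 1) : 0 ≤ m ≤ q−1} and has exactly 2q elements; (3) n is conjugate to n^{−1} in G_{p,q} but n is not conjugate to n^{−1} in the index-2 subgroup N_{pq²} = {(a^l, c^m)}; (4) the real conjugacy class of n in G_{p,q} coincides with the real conjugacy class of n in N_{pq²}, i.e. (n)^±_{G_{p,q}} = (n)^±_{N_{pq²}}. Consequently, for every element n of N_{pq²} whose order is not a prime power, (n)^±_{G_{p,q}} = (n)^±_{N_{pq²}}. -/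
open Multiplicative

/-!
Conjugating `(aᴸ, 1)` by `(aʲ, cᵐ)` gives `(a^{L iᵐ}, 1)`, and by `(b aʲ, cᵐ)` gives
`(a^{-L iᵐ}, 1)`; only the first kind of conjugator lies in `N_{pq²}`. So in `G_{p,q}` the
element `n = (aˡ, 1)` is conjugate to `n⁻¹` and its class is `{(a^{±l iᵐ}, 1)}`, while the
`N_{pq²}`-classes of `n` and `n⁻¹` are its `+` and `-` halves. Reducing mod `p`,
the `l iᵐ` (`m < q`) are distinct because `i` has order `q`; reducing mod `q`, where `i ≡ 1`,
`l iᵐ = -l iᵐ'` would force `q ∣ 2l`. Finally, an element `(aʲ, cˢ)` with `cˢ ≠ 1` satisfies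
`(aʲ, cˢ)^q = (a^{j ∑ₜ i^{st}}, 1) = 1`, the geometric sum vanishing both mod `p` and mod `q`;
so every element of `N_{pq²}` of non-prime-power order lies in `⟨a⟩`.
-/

theorem SemidirectProduct.mul_mk_one_mul_inv {N G : Type*} [Group N] [Group G]
    {φ : G →* MulAut N} (g : N ⋊[φ] G) (x : N) :
    g * ⟨x, 1⟩ * g⁻¹ = ⟨g.left * φ g.right x * g.left⁻¹, 1⟩ := by
  ext
  · simp only [SemidirectProduct.mul_left, SemidirectProduct.inv_left,
      SemidirectProduct.mul_right, map_inv, mul_one, MulAut.apply_inv_self]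
  · simp

theorem SemidirectProduct.orderOf_mk_one {N G : Type*} [Group N] [Group G] {φ : G →* MulAut N}
    (x : N) : orderOf (⟨x, 1⟩ : N ⋊[φ] G) = orderOf x :=
  orderOf_injective SemidirectProduct.inl SemidirectProduct.inl_injective x

theorem ZMod.eq_zero_of_castHom_eq_zero {m n : ℕ} (hmn : m.Coprime n) {x : ZMod (m * n)}
    (hm : ZMod.castHom (dvd_mul_right m n) (ZMod m) x = 0)
    (hn : ZMod.castHom (dvd_mul_left n m) (ZMod n) x = 0) : x = 0 := by
  apply (ZMod.chineseRemainder hmn).injective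
  rw [map_zero]
  exact Prod.ext (by simpa [ZMod.chineseRemainder] using hm)
    (by simpa [ZMod.chineseRemainder] using hn)

theorem exists_prime_pow_orderOf_eq {G : Type*} [Monoid G] {g : G} {ℓ k : ℕ} (hℓ : ℓ.Prime)
    (hg : g ^ ℓ ^ k = 1) : ∃ ℓ k : ℕ, ℓ.Prime ∧ orderOf g = ℓ ^ k := by
  obtain ⟨e, -, he⟩ := (Nat.dvd_prime_pow hℓ).mp (orderOf_dvd_of_pow_eq_one hg)
  exact ⟨ℓ, e, hℓ, he⟩

namespace Mizerka

theorem realClass_eq_setOf_isConj {G : Type*} [Group G] {g : G} (hg : IsConj g g⁻¹) :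
    realClass g = {x | IsConj g x} := by
  ext x
  exact or_iff_left_of_imp hg.trans

namespace Hyp

variable {p q i : ℕ} (h : Hyp p q i)
include h

theorem coprime_p_q : p.Coprime q := by
  refine (Nat.coprime_primes h.hp h.hq).mpr fun hpq => ?_
  subst hpq
  exact Nat.not_dvd_of_pos_of_lt (Nat.sub_pos_of_lt h.hp.one_lt) (Nat.sub_lt h.hp.pos one_pos)
    h.hdvd

theorem natCast_i_zmod_q_eq_one : (i : ZMod q) = 1 := by
  simpa using (ZMod.natCast_eq_natCast_iff i 1 q).mpr h.hmod

theorem phiG_apply_r (z : Multiplicative (ZMod q)) (m : ZMod (p * q)) :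
    h.phiG z (DihedralGroup.r m) = DihedralGroup.r ((i : ZMod (p * q)) ^ (toAdd z).val * m) := by
  rw [h.phiG_r, Units.val_pow_eq_pow_val, Hyp.unit, ZMod.coe_unitOfCoprime]

theorem geom_sum_pow_eq_zero {s : ℕ} (hs0 : s ≠ 0) (hsq : s < q) :
    ∑ t ∈ Finset.range q, ((i : ZMod (p * q)) ^ s) ^ t = 0 := by
  have : Fact p.Prime := ⟨h.hp⟩
  refine ZMod.eq_zero_of_castHom_eq_zero h.coprime_p_q ?_ ?_ <;>
    simp only [map_sum, map_pow, map_natCast]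
  · -- `i ^ s` is a primitive `q`-th root of unity mod `p`, and `i ≡ 1` mod `q`.
    have hprim : IsPrimitiveRoot (i : ZMod p) q := h.hord ▸ IsPrimitiveRoot.orderOf _
    exact (hprim.pow_of_coprime s (Nat.coprime_of_lt_prime hs0 hsq h.hq).symm).geom_sum_eq_zero
      h.hq.one_lt
  · simp [h.natCast_i_zmod_q_eq_one]

theorem natCast_mul_pow_injOn {l : ℕ} (hpl : ¬ p ∣ l) :
    Set.InjOn (fun m : ℕ => (l : ZMod (p * q)) * (i : ZMod (p * q)) ^ m) (Set.Iio q) := by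
  have : Fact p.Prime := ⟨h.hp⟩
  intro m hm m' hm' heq
  replace heq := congrArg (ZMod.castHom (dvd_mul_right p q) (ZMod p)) heq
  simp only [map_mul, map_pow, map_natCast] at heq
  have hl : (l : ZMod p) ≠ 0 := by rwa [Ne, ZMod.natCast_eq_zero_iff]
  rw [← h.hord] at hm hm'
  exact pow_injOn_Iio_orderOf hm hm' (mul_left_cancel₀ hl heq)

theorem natCast_mul_pow_ne_neg {l : ℕ} (hql : ¬ q ∣ l) (m m' : ℕ) :
    (l : ZMod (p * q)) * (i : ZMod (p * q)) ^ m ≠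
      -((l : ZMod (p * q)) * (i : ZMod (p * q)) ^ m') := by
  intro heq
  replace heq := congrArg (ZMod.castHom (dvd_mul_left q p) (ZMod q)) heq
  simp only [map_neg, map_mul, map_pow, map_natCast, h.natCast_i_zmod_q_eq_one, one_pow, mul_one] at heq
  rcases (ZMod.neg_eq_self_iff _).mp heq.symm with hl | hl
  · exact hql ((ZMod.natCast_eq_zero_iff l q).mp hl)
  · exact h.hoddq.not_two_dvd_nat ⟨_, hl.symm⟩

end Hyp

open DihedralGroup

variable {p q i : ℕ} (h : Hyp p q i)

theorem mk_r_one_inv (L : ZMod (p * q)) : (⟨r L, 1⟩ : Gpq h)⁻¹ = ⟨r (-L), 1⟩ := by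
  ext <;> simp

theorem mk_r_conj_mk_r_one (j L : ZMod (p * q)) (z : Multiplicative (ZMod q)) :
    (⟨r j, z⟩ : Gpq h) * ⟨r L, 1⟩ * (⟨r j, z⟩ : Gpq h)⁻¹ =
      ⟨r (L * (i : ZMod (p * q)) ^ (toAdd z).val), 1⟩ := by
  rw [SemidirectProduct.mul_mk_one_mul_inv]
  simp only [h.phiG_apply_r, inv_r, r_mul_r]
  congr 2
  ring

theorem mk_sr_conj_mk_r_one (j L : ZMod (p * q)) (z : Multiplicative (ZMod q)) :
    (⟨sr j, z⟩ : Gpq h) * ⟨r L, 1⟩ * (⟨sr j, z⟩ : Gpq h)⁻¹ =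
      ⟨r (-(L * (i : ZMod (p * q)) ^ (toAdd z).val)), 1⟩ := by
  rw [SemidirectProduct.mul_mk_one_mul_inv]
  simp only [h.phiG_apply_r, inv_sr, sr_mul_r, sr_mul_sr]
  congr 2
  ring

theorem isConj_mk_r_one_iff (L : ZMod (p * q)) (x : Gpq h) :
    IsConj (⟨r L, 1⟩ : Gpq h) x ↔ ∃ m < q,
      x = ⟨r (L * (i : ZMod (p * q)) ^ m), 1⟩ ∨ x = ⟨r (-(L * (i : ZMod (p * q)) ^ m)), 1⟩ := by
  have : NeZero q := ⟨h.hq.ne_zero⟩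
  rw [isConj_iff]
  constructor
  · rintro ⟨⟨_ | j, z⟩, rfl⟩
    · exact ⟨_, ZMod.val_lt _, .inl (mk_r_conj_mk_r_one h _ L z)⟩
    · exact ⟨_, ZMod.val_lt _, .inr (mk_sr_conj_mk_r_one h _ L z)⟩
  · rintro ⟨m, hm, rfl | rfl⟩
    · refine ⟨⟨r 0, ofAdd (m : ZMod q)⟩, ?_⟩
      rw [mk_r_conj_mk_r_one, toAdd_ofAdd, ZMod.val_natCast_of_lt hm]
    · refine ⟨⟨sr 0, ofAdd (m : ZMod q)⟩, ?_⟩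
      rw [mk_sr_conj_mk_r_one, toAdd_ofAdd, ZMod.val_natCast_of_lt hm]

theorem exists_mem_NSub_conj_mk_r_one_iff (L : ZMod (p * q)) (x : Gpq h) :
    (∃ z ∈ NSub h, x = z * ⟨r L, 1⟩ * z⁻¹) ↔
      ∃ m < q, x = ⟨r (L * (i : ZMod (p * q)) ^ m), 1⟩ := by
  have : NeZero q := ⟨h.hq.ne_zero⟩
  constructor
  · rintro ⟨⟨_, z⟩, ⟨j, rfl⟩, rfl⟩
    exact ⟨_, ZMod.val_lt _, mk_r_conj_mk_r_one h j L z⟩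
  · rintro ⟨m, hm, rfl⟩
    refine ⟨⟨r 0, ofAdd (m : ZMod q)⟩, ⟨0, rfl⟩, ?_⟩
    rw [mk_r_conj_mk_r_one, toAdd_ofAdd, ZMod.val_natCast_of_lt hm]

theorem isConj_mk_r_one_inv (L : ZMod (p * q)) :
    IsConj (⟨r L, 1⟩ : Gpq h) (⟨r L, 1⟩ : Gpq h)⁻¹ := by
  rw [mk_r_one_inv, isConj_mk_r_one_iff]
  exact ⟨0, h.hq.pos, .inr (by rw [pow_zero, mul_one])⟩

theorem realClass_mk_r_one (L : ZMod (p * q)) :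
    realClass (⟨r L, 1⟩ : Gpq h) = {x : Gpq h | ∃ z ∈ NSub h,
      x = z * ⟨r L, 1⟩ * z⁻¹ ∨ x = z * (⟨r L, 1⟩ : Gpq h)⁻¹ * z⁻¹} := by
  rw [realClass_eq_setOf_isConj (isConj_mk_r_one_inv h L)]
  ext x
  simp only [Set.mem_ofPred_eq, and_or_left, exists_or, isConj_mk_r_one_iff, mk_r_one_inv,
    exists_mem_NSub_conj_mk_r_one_iff, neg_mul]

theorem not_exists_mem_NSub_conj_eq_inv {l : ℕ} (hql : ¬ q ∣ l) :
    ¬ ∃ z ∈ NSub h,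
      z * ⟨r (l : ZMod (p * q)), 1⟩ * z⁻¹ = (⟨r (l : ZMod (p * q)), 1⟩ : Gpq h)⁻¹ := by
  rintro ⟨z, hz, hconj⟩
  obtain ⟨m, -, hm⟩ := (exists_mem_NSub_conj_mk_r_one_iff h _ _).mp ⟨z, hz, hconj.symm⟩
  rw [mk_r_one_inv] at hm
  refine h.natCast_mul_pow_ne_neg hql m 0 ?_
  simpa using (congrArg SemidirectProduct.left hm).symm

theorem orderOf_mk_natCast_r_one {l : ℕ} (hpl : ¬ p ∣ l) (hql : ¬ q ∣ l) :
    orderOf (⟨r (l : ZMod (p * q)), 1⟩ : Gpq h) = p * q := by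
  have : NeZero (p * q) := ⟨mul_ne_zero h.hp.ne_zero h.hq.ne_zero⟩
  have hl : Nat.Coprime (p * q) l :=
    Nat.Coprime.mul_left (h.hp.coprime_iff_not_dvd.mpr hpl) (h.hq.coprime_iff_not_dvd.mpr hql)
  rw [SemidirectProduct.orderOf_mk_one, orderOf_r, ZMod.val_natCast,
    Nat.gcd_comm, ← Nat.gcd_rec, hl, Nat.div_one]

theorem card_setOf_isConj_mk_natCast_r_one {l : ℕ} (hpl : ¬ p ∣ l) (hql : ¬ q ∣ l) :
    Nat.card {x : Gpq h | IsConj ⟨r (l : ZMod (p * q)), 1⟩ x} = 2 * q := by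
  set L : ZMod (p * q) := (l : ZMod (p * q))
  let f (m : Fin q) : Gpq h := ⟨r (L * (i : ZMod (p * q)) ^ (m : ℕ)), 1⟩
  let g (m : Fin q) : Gpq h := ⟨r (-(L * (i : ZMod (p * q)) ^ (m : ℕ))), 1⟩
  have hrange : {x : Gpq h | IsConj ⟨r L, 1⟩ x} = Set.range (Sum.elim f g) := by
    ext x
    simp only [Set.mem_ofPred_eq, isConj_mk_r_one_iff, Set.Sum.elim_range, Set.mem_union,
      Set.mem_range, Fin.exists_iff, f, g, exists_prop, and_or_left, exists_or, @eq_comm _ x]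
  have hf : Function.Injective f := fun m m' hmm' => Fin.ext <|
    h.natCast_mul_pow_injOn hpl m.isLt m'.isLt (r.inj (congrArg SemidirectProduct.left hmm'))
  have hg : Function.Injective g := fun m m' hmm' => Fin.ext <|
    h.natCast_mul_pow_injOn hpl m.isLt m'.isLt
      (neg_injective (r.inj (congrArg SemidirectProduct.left hmm')))
  have hfg (m m' : Fin q) : f m ≠ g m' := fun hmm' =>
    h.natCast_mul_pow_ne_neg hql m m' (r.inj (congrArg SemidirectProduct.left hmm'))
  rw [hrange, Nat.card_range_of_injective (hf.sumElim hg hfg), Nat.card_sum,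
    Nat.card_eq_fintype_card, Fintype.card_fin, two_mul]

theorem mk_r_pow (j : ZMod (p * q)) (z : Multiplicative (ZMod q)) (k : ℕ) :
    (⟨r j, z⟩ : Gpq h) ^ k =
      ⟨r ((∑ t ∈ Finset.range k, ((i : ZMod (p * q)) ^ (toAdd z).val) ^ t) * j), z ^ k⟩ := by
  induction k with
  | zero => ext <;> simp
  | succ k ih =>
    rw [pow_succ', ih]
    ext
    · simp only [SemidirectProduct.mul_left, h.phiG_apply_r, r_mul_r, geom_sum_succ]
      congr 1
      ring
    · exact (pow_succ' z k).symm

theorem mk_r_pow_q_eq_one (j : ZMod (p * q)) {z : Multiplicative (ZMod q)} (hz : z ≠ 1) :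
    (⟨r j, z⟩ : Gpq h) ^ q = 1 := by
  have : NeZero q := ⟨h.hq.ne_zero⟩
  have hval : (toAdd z).val ≠ 0 := by rwa [Ne, ZMod.val_eq_zero, toAdd_eq_zero]
  have hzq : z ^ q = 1 := by
    rw [← ofAdd_toAdd (z ^ q), toAdd_pow, nsmul_eq_mul, ZMod.natCast_self, zero_mul, ofAdd_zero]
  rw [mk_r_pow, h.geom_sum_pow_eq_zero hval (ZMod.val_lt _), zero_mul, hzq]
  rfl

theorem right_eq_one_of_mem_NSub {m : Gpq h} (hm : m ∈ NSub h)
    (hord : ¬ ∃ ℓ k : ℕ, ℓ.Prime ∧ orderOf m = ℓ ^ k) : m.right = 1 := by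
  by_contra hz
  obtain ⟨j, hj⟩ := hm
  have hm : m = ⟨r j, m.right⟩ := SemidirectProduct.ext hj rfl
  exact hord (exists_prime_pow_orderOf_eq (k := 1) h.hq
    (by rw [pow_one, hm, mk_r_pow_q_eq_one h j hz]))

end Mizerka

open Mizerka Multiplicative in
/-- For `n = (aˡ, 1)` with `p ∤ l`, `q ∤ l`: `n` has order `pq`; its
conjugacy class in `G_{p,q}` is `{(a^{±l iᵐ}, 1)}` of size `2q`; `n` is conjugate to `n⁻¹`
in `G_{p,q}` but not in `N_{pq²}`; and the real conjugacy classes of `n` in `G_{p,q}` and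
in `N_{pq²}` coincide. Consequently the latter holds for every element of `N_{pq²}` whose
order is not a prime power. -/
theorem statement_10 {p q i : ℕ} (h : Hyp p q i) (l : ℕ) (hpl : ¬ p ∣ l) (hql : ¬ q ∣ l) :
    let n : Gpq h := ⟨DihedralGroup.r (l : ZMod (p * q)), 1⟩
    orderOf n = p * q ∧
    ({x : Gpq h | IsConj n x} =
      {x : Gpq h | ∃ m : ℕ, m < q ∧
        (x = ⟨DihedralGroup.r ((l * i ^ m : ℕ) : ZMod (p * q)), 1⟩ ∨
         x = ⟨DihedralGroup.r (-((l * i ^ m : ℕ) : ZMod (p * q))), 1⟩)}) ∧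
    Nat.card {x : Gpq h | IsConj n x} = 2 * q ∧
    IsConj n n⁻¹ ∧
    (¬ ∃ z ∈ NSub h, z * n * z⁻¹ = n⁻¹) ∧
    (realClass n = {x : Gpq h | ∃ z ∈ NSub h, x = z * n * z⁻¹ ∨ x = z * n⁻¹ * z⁻¹}) ∧
    (∀ m : Gpq h, m ∈ NSub h → (¬ ∃ ℓ k : ℕ, Nat.Prime ℓ ∧ orderOf m = ℓ ^ k) →
      realClass m = {x : Gpq h | ∃ z ∈ NSub h, x = z * m * z⁻¹ ∨ x = z * m⁻¹ * z⁻¹}) := by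
  intro n
  have hclass : {x : Gpq h | IsConj n x} = {x : Gpq h | ∃ m : ℕ, m < q ∧
      (x = ⟨DihedralGroup.r ((l * i ^ m : ℕ) : ZMod (p * q)), 1⟩ ∨
       x = ⟨DihedralGroup.r (-((l * i ^ m : ℕ) : ZMod (p * q))), 1⟩)} := by
    ext x
    simp only [n, Set.mem_ofPred_eq, isConj_mk_r_one_iff, Nat.cast_mul, Nat.cast_pow]
  refine ⟨orderOf_mk_natCast_r_one h hpl hql, hclass,
    card_setOf_isConj_mk_natCast_r_one h hpl hql, isConj_mk_r_one_inv h _, not_exists_mem_NSub_conj_eq_inv h hql, realClass_mk_r_one h _,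
    fun m hm hord => ?_⟩
  obtain ⟨j, hj⟩ := hm
  obtain rfl : m = ⟨DihedralGroup.r j, 1⟩ :=
    SemidirectProduct.ext hj (right_eq_one_of_mem_NSub h ⟨j, hj⟩ hord)
  exact realClass_mk_r_one h j
end

section
/- The following quotient isomorphisms hold: G_{p,q}/N¹_{pq} ≅ C_{2q} (the cyclic group of order 2q), G_{p,q}/N²_{pq} ≅ D_{2q} (the dihedral group of order 2q), and G_{p,q}/N_p ≅ C_q × D_{2q}. -/
open Multiplicative

/-! Since `i ≡ 1 (mod q)`, the twist `τ` preserves both the sign `D_{2pq} → C₂` and the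
reduction `D_{2pq} → D_{2q}` modulo `q`, so both extend to `G_{p,q}` through the first
coordinate. `N¹_{pq}`, `N²_{pq}` and `N_p` are the kernels of the surjections
(sign, exponent of `c`), reduction, and (exponent of `c`, reduction); finally
`C₂ × C_q ≅ C_{2q}` by the Chinese remainder theorem, `q` being odd. -/

namespace SemidirectProduct

variable {N G H : Type*} [Group N] [Group G] [Group H] {φ : G →* MulAut N}

def liftLeft (f : N →* H) (hf : ∀ g n, f (φ g n) = f n) : N ⋊[φ] G →* H where
  toFun x := f x.left
  map_one' := map_one f
  map_mul' x y := by rw [mul_left, map_mul, hf]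

@[simp]
theorem liftLeft_apply (f : N →* H) (hf : ∀ g n, f (φ g n) = f n) (x : N ⋊[φ] G) :
    liftLeft f hf x = f x.left :=
  rfl

theorem liftLeft_surjective {f : N →* H} (hf : ∀ g n, f (φ g n) = f n)
    (hsurj : Function.Surjective f) : Function.Surjective (liftLeft (G := G) f hf) := fun a ↦
  let ⟨n, hn⟩ := hsurj a
  ⟨⟨n, 1⟩, hn⟩

theorem liftLeft_prod_rightHom_surjective {f : N →* H} (hf : ∀ g n, f (φ g n) = f n)
    (hsurj : Function.Surjective f) :
    Function.Surjective ((liftLeft (G := G) f hf).prod rightHom) := fun ⟨a, g⟩ ↦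
  let ⟨n, hn⟩ := hsurj a
  ⟨⟨n, g⟩, Prod.ext hn rfl⟩

theorem rightHom_prod_liftLeft_surjective {f : N →* H} (hf : ∀ g n, f (φ g n) = f n)
    (hsurj : Function.Surjective f) :
    Function.Surjective ((rightHom : N ⋊[φ] G →* G).prod (liftLeft f hf)) := fun ⟨g, a⟩ ↦
  let ⟨n, hn⟩ := hsurj a
  ⟨⟨n, g⟩, Prod.ext rfl hn⟩

end SemidirectProduct

theorem ZMod.castHom_eq_zero_iff {m n : ℕ} (hd : m ∣ n) (l : ZMod n) :
    ZMod.castHom hd (ZMod m) l = 0 ↔ ∃ s : ZMod n, l = m * s := by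
  constructor
  · intro hl
    obtain ⟨k, rfl⟩ := ZMod.intCast_surjective l
    rw [map_intCast, ZMod.intCast_zmod_eq_zero_iff_dvd] at hl
    obtain ⟨t, rfl⟩ := hl
    exact ⟨t, by push_cast; rfl⟩
  · rintro ⟨s, rfl⟩
    rw [map_mul, map_natCast, ZMod.natCast_self, zero_mul]

def ZMod.prodMultiplicativeMulEquiv {m n : ℕ} (hmn : m.Coprime n) :
    Multiplicative (ZMod m) × Multiplicative (ZMod n) ≃* Multiplicative (ZMod (m * n)) :=
  (MulEquiv.prodMultiplicative (G := ZMod m) (H := ZMod n)).symm.trans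
    (AddEquiv.toMultiplicative (ZMod.chineseRemainder hmn).toAddEquiv).symm

namespace DihedralGroup

variable {m n : ℕ}

def sign : DihedralGroup n →* Multiplicative (ZMod 2) where
  toFun
    | r _ => 1
    | sr _ => ofAdd 1
  map_one' := rfl
  map_mul' x y := by
    cases x <;> cases y <;> simp only [r_mul_r, r_mul_sr, sr_mul_r, sr_mul_sr] <;> decide

theorem sign_eq_one_iff (x : DihedralGroup n) : sign x = 1 ↔ ∃ l, x = r l := by
  cases x with
  | r l => exact iff_of_true rfl ⟨l, rfl⟩
  | sr l => exact iff_of_false (show ofAdd (1 : ZMod 2) ≠ 1 by decide) (by simp)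

theorem sign_surjective : Function.Surjective (sign : DihedralGroup n → _) := by
  intro s
  obtain rfl | rfl : s = 1 ∨ s = ofAdd 1 := by revert s; decide
  exacts [⟨r 0, rfl⟩, ⟨sr 0, rfl⟩]

theorem sign_dihedralAut (u : (ZMod n)ˣ) (x : DihedralGroup n) :
    sign (Mizerka.dihedralAut n u x) = sign x := by
  cases x <;> rfl

def castHom (hd : m ∣ n) : DihedralGroup n →* DihedralGroup m where
  toFun
    | r j => r (ZMod.castHom hd (ZMod m) j)
    | sr j => sr (ZMod.castHom hd (ZMod m) j)
  map_one' := congrArg r (map_zero _)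
  map_mul' x y := by cases x <;> cases y <;> simp [map_add, map_sub]

@[simp]
theorem castHom_r (hd : m ∣ n) (j : ZMod n) :
    castHom hd (r j) = r (ZMod.castHom hd (ZMod m) j) :=
  rfl

@[simp]
theorem castHom_sr (hd : m ∣ n) (j : ZMod n) :
    castHom hd (sr j) = sr (ZMod.castHom hd (ZMod m) j) :=
  rfl

theorem castHom_surjective (hd : m ∣ n) : Function.Surjective (castHom hd) := by
  intro x
  cases x with
  | r j =>
    obtain ⟨k, rfl⟩ := ZMod.castHom_surjective hd j
    exact ⟨r k, rfl⟩
  | sr j =>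
    obtain ⟨k, rfl⟩ := ZMod.castHom_surjective hd j
    exact ⟨sr k, rfl⟩

theorem castHom_eq_one_iff (hd : m ∣ n) (x : DihedralGroup n) :
    castHom hd x = 1 ↔ ∃ s : ZMod n, x = r ((m : ZMod n) * s) := by
  cases x with
  | r l => simp only [castHom_r, one_def, r.injEq, ZMod.castHom_eq_zero_iff]
  | sr l =>
    exact iff_of_false (by rw [castHom_sr, one_def]; exact nofun) fun ⟨_, hs⟩ ↦ nomatch hs

theorem castHom_dihedralAut (hd : m ∣ n) {u : (ZMod n)ˣ}
    (hu : ZMod.castHom hd (ZMod m) u = 1) (x : DihedralGroup n) :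
    castHom hd (Mizerka.dihedralAut n u x) = castHom hd x := by
  cases x with
  | r l => show r (ZMod.castHom hd (ZMod m) (u * l)) = _; rw [map_mul, hu, one_mul]; rfl
  | sr l => show sr (ZMod.castHom hd (ZMod m) (u * l)) = _; rw [map_mul, hu, one_mul]; rfl

end DihedralGroup

namespace Mizerka

open DihedralGroup SemidirectProduct

variable {p q i : ℕ}

theorem Hyp.phiG_apply (h : Hyp p q i) (z : Multiplicative (ZMod q)) :
    h.phiG z = dihedralAut (p * q) (h.unit ^ (toAdd z).val) :=
  (map_pow _ _ _).symm

theorem Hyp.castHom_unit_pow (h : Hyp p q i) (k : ℕ) :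
    ZMod.castHom (dvd_mul_left q p) (ZMod q) ↑(h.unit ^ k) = 1 := by
  have hi : (i : ZMod q) = 1 := by simpa using (ZMod.natCast_eq_natCast_iff i 1 q).mpr h.hmod
  simp [Hyp.unit, hi]

def Hyp.signHom (h : Hyp p q i) : Gpq h →* Multiplicative (ZMod 2) :=
  liftLeft sign fun z x ↦ by rw [h.phiG_apply, sign_dihedralAut]

def Hyp.reduceHom (h : Hyp p q i) : Gpq h →* DihedralGroup q :=
  liftLeft (castHom (dvd_mul_left q p)) fun z x ↦ by
    rw [h.phiG_apply, castHom_dihedralAut _ (h.castHom_unit_pow _)]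

theorem Hyp.npqOneSub_eq_ker (h : Hyp p q i) : NpqOneSub h = (h.signHom.prod rightHom).ker := by
  ext x
  simp [NpqOneSub, Hyp.signHom, Prod.ext_iff, sign_eq_one_iff, and_comm]

theorem Hyp.npqTwoSub_eq_ker (h : Hyp p q i) : NpqTwoSub h = h.reduceHom.ker := by
  ext x
  simp [NpqTwoSub, Hyp.reduceHom, castHom_eq_one_iff]

theorem Hyp.npSub_eq_ker (h : Hyp p q i) : NpSub h = (rightHom.prod h.reduceHom).ker := by
  ext x
  simp [NpSub, Hyp.reduceHom, Prod.ext_iff, castHom_eq_one_iff]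

end Mizerka

theorem QuotientGroup.nonempty_mulEquiv_of_eq_ker {G H : Type*} [Group G] [Group H]
    {N : Subgroup G} [N.Normal] {f : G →* H} (hN : N = f.ker) (hf : Function.Surjective f) :
    Nonempty (G ⧸ N ≃* H) := by
  subst hN
  exact ⟨QuotientGroup.quotientKerEquivOfSurjective f hf⟩

open Mizerka in
/-- `G_{p,q}/N¹_{pq} ≅ C_{2q}`, `G_{p,q}/N²_{pq} ≅ D_{2q}` and
`G_{p,q}/N_p ≅ C_q × D_{2q}`. -/
theorem statement_14 {p q i : ℕ} (h : Hyp p q i) :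
    ∃ _h1 : (NpqOneSub h).Normal, ∃ _h2 : (NpqTwoSub h).Normal, ∃ _h3 : (NpSub h).Normal,
      haveI := _h1
      haveI := _h2
      haveI := _h3
      (Nonempty ((Gpq h ⧸ NpqOneSub h) ≃* Multiplicative (ZMod (2 * q))) ∧
       Nonempty ((Gpq h ⧸ NpqTwoSub h) ≃* DihedralGroup q) ∧
       Nonempty ((Gpq h ⧸ NpSub h) ≃* (Multiplicative (ZMod q) × DihedralGroup q))) := by
  have hk1 := h.npqOneSub_eq_ker
  have hk2 := h.npqTwoSub_eq_ker
  have hk3 := h.npSub_eq_ker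
  have n1 : (NpqOneSub h).Normal := hk1 ▸ MonoidHom.normal_ker _
  have n2 : (NpqTwoSub h).Normal := hk2 ▸ MonoidHom.normal_ker _
  have n3 : (NpSub h).Normal := hk3 ▸ MonoidHom.normal_ker _
  have hred := DihedralGroup.castHom_surjective (dvd_mul_left q p)
  refine ⟨n1, n2, n3, ?_, ?_, ?_⟩
  · have e := ZMod.prodMultiplicativeMulEquiv (Nat.coprime_two_left.mpr h.hoddq)
    exact (QuotientGroup.nonempty_mulEquiv_of_eq_ker hk1
      (SemidirectProduct.liftLeft_prod_rightHom_surjective _ DihedralGroup.sign_surjective)).map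
      (·.trans e)
  · exact QuotientGroup.nonempty_mulEquiv_of_eq_ker hk2
      (SemidirectProduct.liftLeft_surjective _ hred)
  · exact QuotientGroup.nonempty_mulEquiv_of_eq_ker hk3
      (SemidirectProduct.rightHom_prod_liftLeft_surjective _ hred)
end

section
/- The quotient group G_{p,q}/N_q, which has order 2pq, is not nilpotent and is not of prime power order. -/
open Multiplicative

/-!
`N_q = ⟨a^p⟩` has order `q`, so `G_{p,q}/N_q` has order `2pq`, which has the two prime factors `2`
and `p`. In the quotient the images of the reflections `b` and `ba` are involutions whose product
is the image of `a`: it is nontrivial (`a ∉ N_q`) and of odd order (dividing `pq`). In a finite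
nilpotent group the Sylow `2`-subgroup is normal, hence contains all involutions and their
products, and so cannot contain such an element.
-/

section Involutions

variable {G : Type*} [Group G] [Finite G]

theorem Sylow.mem_of_pow_prime_pow_eq_one {ℓ : ℕ} [Fact ℓ.Prime] (P : Sylow ℓ G) [P.Normal]
    {g : G} {k : ℕ} (hg : g ^ ℓ ^ k = 1) : g ∈ P := by
  have hzpowers : IsPGroup ℓ (Subgroup.zpowers g) :=
    IsPGroup.of_card_dvd_pow (n := k) (Nat.card_zpowers g ▸ orderOf_dvd_of_pow_eq_one hg)
  obtain ⟨Q, hQ⟩ := hzpowers.exists_le_sylow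
  have : Unique (Sylow ℓ G) := Sylow.unique_of_normal P ‹_›
  exact Subsingleton.elim Q P ▸ hQ (Subgroup.mem_zpowers g)

theorem Group.not_isNilpotent_of_sq_eq_one {x y : G} (hx : x ^ 2 = 1) (hy : y ^ 2 = 1)
    (hxy : x * y ≠ 1) (hodd : Odd (orderOf (x * y))) : ¬ Group.IsNilpotent G := by
  intro _
  have : Fact (Nat.Prime 2) := ⟨Nat.prime_two⟩
  obtain ⟨P⟩ : Nonempty (Sylow 2 G) := inferInstance
  have hmem : x * y ∈ P :=
    mul_mem (P.mem_of_pow_prime_pow_eq_one (k := 1) hx) (P.mem_of_pow_prime_pow_eq_one (k := 1) hy)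
  have htwo : 2 ∣ orderOf (x * y) := by
    simpa using P.isPGroup'.dvd_orderOf (g := ⟨x * y, hmem⟩) (by simpa using hxy)
  exact Nat.not_even_iff_odd.mpr hodd (even_iff_two_dvd.mpr htwo)

end Involutions

theorem Nat.Prime.eq_of_dvd_prime_pow {a b ℓ k : ℕ} (ha : a.Prime) (hb : b.Prime) (hℓ : ℓ.Prime)
    (hak : a ∣ ℓ ^ k) (hbk : b ∣ ℓ ^ k) : a = b :=
  ((Nat.prime_dvd_prime_iff_eq ha hℓ).mp (ha.dvd_of_dvd_pow hak)).trans
    ((Nat.prime_dvd_prime_iff_eq hb hℓ).mp (hb.dvd_of_dvd_pow hbk)).symm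

theorem SemidirectProduct.conj_inl {N G : Type*} [Group N] [Group G] {φ : G →* MulAut N}
    (g : N ⋊[φ] G) (n : N) : g * inl n * g⁻¹ = inl (g.left * φ g.right n * g.left⁻¹) := by
  ext <;> simp [mul_assoc]

namespace DihedralGroup

theorem exists_conj_r_eq {n : ℕ} (g : DihedralGroup n) (m : ZMod n) :
    ∃ c : ZMod n, g * r m * g⁻¹ = r (c * m) := by
  cases g with
  | r j => exact ⟨1, by simp [r_mul_r]⟩
  | sr j => exact ⟨-1, by simp [sr_mul_r, sr_mul_sr]⟩

theorem orderOf_r_natCast {a b : ℕ} (ha : 0 < a) (hb : 1 < b) :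
    orderOf (r (a : ZMod (a * b))) = b := by
  have : NeZero (a * b) := ⟨by positivity⟩
  rw [orderOf_r, ZMod.val_natCast, Nat.mod_eq_of_lt (by nlinarith), Nat.gcd_mul_right_left,
    Nat.mul_div_cancel_left b ha]

end DihedralGroup

namespace Mizerka

open DihedralGroup SemidirectProduct

variable {p q i : ℕ} (h : Hyp p q i)

theorem exists_conj_inl_r (g : Gpq h) (m : ZMod (p * q)) :
    ∃ c : ZMod (p * q), g * inl (r m) * g⁻¹ = inl (r (c * m)) := by
  obtain ⟨c, hc⟩ := exists_conj_r_eq g.left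
    (((h.unit ^ (toAdd g.right).val : (ZMod (p * q))ˣ) : ZMod (p * q)) * m)
  exact ⟨c * _, by rw [SemidirectProduct.conj_inl, h.phiG_r, hc, mul_assoc]⟩

theorem mem_NqSub_iff {x : Gpq h} :
    x ∈ NqSub h ↔ ∃ s : ZMod (p * q), x = inl (r ((p : ZMod (p * q)) * s)) := by
  constructor
  · rintro ⟨hright, s, hleft⟩
    exact ⟨s, by rw [← inl_left_mul_inr_right x, hright, hleft, map_one, mul_one]⟩
  · rintro ⟨s, rfl⟩
    exact ⟨rfl, s, rfl⟩

theorem NqSub_normal : (NqSub h).Normal where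
  conj_mem x hx g := by
    obtain ⟨s, rfl⟩ := (mem_NqSub_iff h).mp hx
    obtain ⟨c, hc⟩ := exists_conj_inl_r h g (p * s)
    exact (mem_NqSub_iff h).mpr ⟨c * s, by rw [hc, mul_left_comm]⟩

theorem NqSub_eq_zpowers : NqSub h = Subgroup.zpowers (inl (r (p : ZMod (p * q)))) := by
  ext x
  rw [mem_NqSub_iff, Subgroup.mem_zpowers_iff]
  constructor
  · rintro ⟨s, rfl⟩
    exact ⟨s.cast, by rw [← map_zpow, r_zpow, ZMod.intCast_zmod_cast]⟩
  · rintro ⟨k, rfl⟩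
    exact ⟨k, by rw [← map_zpow, r_zpow]⟩

theorem card_NqSub : Nat.card (NqSub h) = q := by
  rw [NqSub_eq_zpowers, Nat.card_zpowers, orderOf_injective _ inl_injective,
    orderOf_r_natCast h.hp.pos h.hq.one_lt]

theorem card_Gpq : Nat.card (Gpq h) = 2 * p * q * q := by
  simp [DihedralGroup.nat_card, Nat.card_congr Multiplicative.toAdd, mul_assoc]

theorem card_quotient_NqSub [(NqSub h).Normal] : Nat.card (Gpq h ⧸ NqSub h) = 2 * p * q := by
  have hG := card_Gpq h
  rw [Subgroup.card_eq_card_quotient_mul_card_subgroup (NqSub h), card_NqSub] at hG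
  exact Nat.eq_of_mul_eq_mul_right h.hq.pos hG

theorem inl_r_one_notMem_NqSub : inl (r 1) ∉ NqSub h := by
  rw [mem_NqSub_iff]
  rintro ⟨s, hs⟩
  have h1 : (1 : ZMod (p * q)) = p * s := r.inj (inl_injective hs)
  have h0 : (1 : ZMod p) = 0 := by
    simpa using congrArg (ZMod.castHom (dvd_mul_right p q) (ZMod p)) h1
  have : Nontrivial (ZMod p) := ZMod.nontrivial_iff.mpr h.hp.one_lt.ne'
  exact one_ne_zero h0

theorem not_isNilpotent_quotient_NqSub [(NqSub h).Normal] :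
    ¬ Group.IsNilpotent (Gpq h ⧸ NqSub h) := by
  have : Finite (Gpq h) :=
    Nat.finite_of_card_ne_zero (by rw [card_Gpq]; simp [h.hp.ne_zero, h.hq.ne_zero])
  let ψ := (QuotientGroup.mk' (NqSub h)).comp (inl : DihedralGroup (p * q) →* Gpq h)
  have hinv (j : ZMod (p * q)) : ψ (sr j) ^ 2 = 1 := by rw [← map_pow, sq, sr_mul_self, map_one]
  have hprod : ψ (sr 0) * ψ (sr 1) = ψ (r 1) := by rw [← map_mul, sr_mul_sr, sub_zero]
  refine Group.not_isNilpotent_of_sq_eq_one (hinv 0) (hinv 1) ?_ ?_ <;> rw [hprod]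
  · exact fun h1 => inl_r_one_notMem_NqSub h ((QuotientGroup.eq_one_iff _).mp h1)
  · refine (h.hoddp.mul h.hoddq).of_dvd_nat ?_
    exact (orderOf_map_dvd ψ (r 1)).trans (dvd_of_eq orderOf_r_one)

end Mizerka

open Mizerka in
/-- The quotient `G_{p,q}/N_q`, of order `2pq`, is not nilpotent and is not
of prime power order. -/
theorem statement_15 {p q i : ℕ} (h : Hyp p q i) :
    ∃ _hN : (NqSub h).Normal,
      haveI := _hN
      (Nat.card (Gpq h ⧸ NqSub h) = 2 * p * q ∧
       ¬ Group.IsNilpotent (Gpq h ⧸ NqSub h) ∧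
       ¬ ∃ ℓ k : ℕ, Nat.Prime ℓ ∧ Nat.card (Gpq h ⧸ NqSub h) = ℓ ^ k) := by
  have := NqSub_normal h
  refine ⟨this, card_quotient_NqSub h, not_isNilpotent_quotient_NqSub h, ?_⟩
  rintro ⟨ℓ, k, hℓ, hcard⟩
  rw [card_quotient_NqSub h] at hcard
  have h2 : 2 ∣ ℓ ^ k := hcard ▸ dvd_mul_of_dvd_left (dvd_mul_right 2 p) q
  have hp : p ∣ ℓ ^ k := hcard ▸ dvd_mul_of_dvd_left (dvd_mul_left p 2) q
  have h2p : 2 = p := Nat.prime_two.eq_of_dvd_prime_pow h.hp hℓ h2 hp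
  exact Nat.not_even_iff_odd.mpr h.hoddp (h2p ▸ even_two)
end
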